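/- Let m ≥ n, let A ∈ ℝ^{m×n} have full rank n (so its columns a_j are nonzero), and let c ≥ 0. Suppose ΔA ∈ ℝ^{m×n} satisfies |ΔA_{ij}| ≤ c‖a_j‖₂ for all i, j, and that √(mn)·c·κ₂ᴰ(A) < 1. Then for every k with 1 ≤ k ≤ n, |σ_k(A + ΔA) − σ_k(A)| ≤ √(mn)·c·κ₂ᴰ(A)·σ_k(A). -/

import Mathlib

open scoped BigOperators
open Matrix

/-- Euclidean norm of a vector in `ℝ^m`. -/
noncomputable def vecNorm {m : ℕ} (v : Fin m → ℝ) : ℝ :=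
  Real.sqrt (∑ i, v i ^ 2)

/-- The `k`-th largest singular value of a real `m × n` matrix
(`k = 0` gives the largest). -/
noncomputable def sval {m n : ℕ} (A : Matrix (Fin m) (Fin n) ℝ) (k : Fin n) : ℝ :=
  Real.sqrt
    (((Matrix.isHermitian_conjTranspose_mul_self A).eigenvalues ∘
      Tuple.sort (Matrix.isHermitian_conjTranspose_mul_self A).eigenvalues) k.rev)

/-- Spectral norm: the largest singular value. -/
noncomputable def specNorm {m n : ℕ} (A : Matrix (Fin m) (Fin n) ℝ) : ℝ :=
  ⨆ k, sval A k

/-- Smallest singular value. -/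
noncomputable def sMin {m n : ℕ} (A : Matrix (Fin m) (Fin n) ℝ) : ℝ :=
  ⨅ k, sval A k

/-- Frobenius norm. -/
noncomputable def frobNorm {m n : ℕ} (A : Matrix (Fin m) (Fin n) ℝ) : ℝ :=
  Real.sqrt (∑ i, ∑ j, (A i j) ^ 2)

/-- Frobenius norm of the off-diagonal part of a square matrix. -/
noncomputable def offF {n : ℕ} (M : Matrix (Fin n) (Fin n) ℝ) : ℝ :=
  frobNorm (M - Matrix.diagonal (fun i => M i i))

/-- Diagonal matrix of inverse column norms `D(A)`. -/
noncomputable def colScale {m n : ℕ} (A : Matrix (Fin m) (Fin n) ℝ) :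
    Matrix (Fin n) (Fin n) ℝ :=
  Matrix.diagonal (fun j => (vecNorm (fun i => A i j))⁻¹)

/-- Condition number `κ₂(A) = σ_max(A) / σ_min(A)`. -/
noncomputable def kappa2 {m n : ℕ} (A : Matrix (Fin m) (Fin n) ℝ) : ℝ :=
  specNorm A / sMin A

/-- One-sided scaled condition number `κ₂ᴰ(A) = κ₂(A · D(A))`. -/
noncomputable def scaledCond {m n : ℕ} (A : Matrix (Fin m) (Fin n) ℝ) : ℝ :=
  kappa2 (A * colScale A)

/-- Entrywise absolute value of a matrix. -/
def matAbs {m n : ℕ} (A : Matrix (Fin m) (Fin n) ℝ) : Matrix (Fin m) (Fin n) ℝ :=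
  fun i j => |A i j|

/-!
Write `x = D(A) y`. Every entry of `ΔA D(A)` is at most `c` in absolute value, so
`‖ΔA x‖ ≤ ‖ΔA D(A)‖_F ‖y‖ ≤ √(mn) c ‖y‖`. The columns of `A D(A)` are unit vectors, so
`σ_max(A D(A)) ≥ 1`, while `σ_min(A D(A)) ‖y‖ ≤ ‖A D(A) y‖ = ‖A x‖`; together
`‖y‖ ≤ κ₂ᴰ(A) ‖A x‖`. Hence `‖ΔA x‖ ≤ η ‖A x‖` with `η = √(mn) c κ₂ᴰ(A) < 1`, and
`(1 - η) ‖A x‖ ≤ ‖(A + ΔA) x‖ ≤ (1 + η) ‖A x‖` for every `x`. By the Courant–Fischer min-max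
principle such a comparison of the quadratic forms `‖A x‖²` and `‖(A + ΔA) x‖²` passes to the
sorted eigenvalues of `AᵀA` and `(A + ΔA)ᵀ(A + ΔA)`, i.e. to the squared singular values.
-/

open scoped InnerProductSpace
open Module Submodule

section Eigenbasis

variable {E : Type*} [NormedAddCommGroup E] [InnerProductSpace ℝ E]
  {ι : Type*} [Fintype ι] {T : E →ₗ[ℝ] E} {b : OrthonormalBasis ι ℝ E} {μ : ι → ℝ}

theorem inner_apply_self_eq_sum (hT : ∀ j, T (b j) = μ j • b j) (x : E) :
    ⟪T x, x⟫_ℝ = ∑ j, μ j * ⟪b j, x⟫_ℝ ^ 2 := by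
  have hTx : T x = ∑ j, (μ j * ⟪b j, x⟫_ℝ) • b j := by
    conv_lhs => rw [← b.sum_repr' x]
    simp only [map_sum, map_smul, hT, smul_smul, mul_comm]
  simp only [hTx, sum_inner, real_inner_smul_left, sq, mul_assoc]

theorem inner_apply_self_le_of_mem_span (hT : ∀ j, T (b j) = μ j • b j) {S : Set ι} {c : ℝ}
    (hS : ∀ j ∈ S, μ j ≤ c) {x : E} (hx : x ∈ span ℝ (b '' S)) :
    ⟪T x, x⟫_ℝ ≤ c * ‖x‖ ^ 2 := by
  have hsupp := b.toBasis.repr_support_subset_of_mem_span S (by simpa using hx)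
  rw [inner_apply_self_eq_sum hT, ← b.sum_sq_norm_inner_right, Finset.mul_sum]
  refine Finset.sum_le_sum fun j _ => ?_
  rw [Real.norm_eq_abs, sq_abs]
  by_cases hj : j ∈ S
  · exact mul_le_mul_of_nonneg_right (hS j hj) (sq_nonneg _)
  · have hzero : ⟪b j, x⟫_ℝ = 0 := by
      simpa [b.coe_toBasis_repr_apply, b.repr_apply_apply] using fun h => hj (hsupp h)
    simp [hzero]

theorem le_inner_apply_self_of_mem_span (hT : ∀ j, T (b j) = μ j • b j) {S : Set ι} {c : ℝ}
    (hS : ∀ j ∈ S, c ≤ μ j) {x : E} (hx : x ∈ span ℝ (b '' S)) :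
    c * ‖x‖ ^ 2 ≤ ⟪T x, x⟫_ℝ := by
  have hneg : ∀ j, (-T) (b j) = (-μ j) • b j := fun j => by simp [hT]
  have hle := inner_apply_self_le_of_mem_span (c := -c) hneg (fun j hj => neg_le_neg (hS j hj)) hx
  simp only [LinearMap.neg_apply, inner_neg_left] at hle
  linarith

theorem finrank_span_image_finset (b : OrthonormalBasis ι ℝ E) (S : Finset ι) :
    finrank ℝ (span ℝ (b '' S)) = S.card := by
  rw [Set.image_eq_range]
  exact (finrank_span_eq_card (b.orthonormal.linearIndependent.comp _ Subtype.val_injective)).trans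
    (Fintype.card_coe S)

/-- Courant–Fischer: the span of the eigenvectors of `T` below `a` and that of the eigenvectors
of `T'` above `a'` are too large to meet only in `0`. -/
theorem le_mul_of_inner_apply_self_le_mul [FiniteDimensional ℝ E] {ι' : Type*} [Fintype ι']
    {T' : E →ₗ[ℝ] E} {b' : OrthonormalBasis ι' ℝ E} {μ' : ι' → ℝ}
    (hT : ∀ j, T (b j) = μ j • b j) (hT' : ∀ j, T' (b' j) = μ' j • b' j)
    {S : Finset ι} {S' : Finset ι'} (hcard : finrank ℝ E < S.card + S'.card)
    {a a' c : ℝ} (hS : ∀ j ∈ S, μ j ≤ a) (hS' : ∀ j ∈ S', a' ≤ μ' j) (hc : 0 ≤ c)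
    (h : ∀ x, ⟪T' x, x⟫_ℝ ≤ c * ⟪T x, x⟫_ℝ) : a' ≤ c * a := by
  obtain ⟨x, hxS, hxS', hx0⟩ : ∃ x ∈ span ℝ (b '' S), x ∈ span ℝ (b' '' S') ∧ x ≠ 0 := by
    by_contra! hdisj
    have := finrank_add_finrank_le_of_disjoint (disjoint_def.mpr hdisj)
    rw [finrank_span_image_finset, finrank_span_image_finset] at this
    omega
  refine le_of_mul_le_mul_right ?_ (by positivity : 0 < ‖x‖ ^ 2)
  calc a' * ‖x‖ ^ 2 ≤ ⟪T' x, x⟫_ℝ := le_inner_apply_self_of_mem_span hT' hS' hxS'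
    _ ≤ c * ⟪T x, x⟫_ℝ := h x
    _ ≤ c * (a * ‖x‖ ^ 2) :=
      mul_le_mul_of_nonneg_left (inner_apply_self_le_of_mem_span hT hS hxS) hc
    _ = c * a * ‖x‖ ^ 2 := by ring

end Eigenbasis

namespace Matrix.IsHermitian

variable {n : ℕ} {H K : Matrix (Fin n) (Fin n) ℝ}

theorem toLpLin_eigenvectorBasis (hH : H.IsHermitian) (j : Fin n) :
    toLpLin 2 2 H (hH.eigenvectorBasis j) = hH.eigenvalues j • hH.eigenvectorBasis j := by
  ext1
  simp [toLpLin_apply, hH.mulVec_eigenvectorBasis]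

theorem eigenvalues_sort_le_mul (hH : H.IsHermitian) (hK : K.IsHermitian) {c : ℝ} (hc : 0 ≤ c)
    (h : ∀ x, ⟪toLpLin 2 2 K x, x⟫_ℝ ≤ c * ⟪toLpLin 2 2 H x, x⟫_ℝ) (k : Fin n) :
    hK.eigenvalues (Tuple.sort hK.eigenvalues k) ≤
      c * hH.eigenvalues (Tuple.sort hH.eigenvalues k) := by
  refine le_mul_of_inner_apply_self_le_mul hH.toLpLin_eigenvectorBasis hK.toLpLin_eigenvectorBasis
    (S := (Finset.Iic k).map (Tuple.sort hH.eigenvalues).toEmbedding)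
    (S' := (Finset.Ici k).map (Tuple.sort hK.eigenvalues).toEmbedding) ?_ ?_ ?_ hc h
  · simp only [finrank_euclideanSpace_fin, Finset.card_map, Fin.card_Iic, Fin.card_Ici]
    omega
  · intro j hj
    obtain ⟨i, hi, rfl⟩ := Finset.mem_map.mp hj
    exact Tuple.monotone_sort hH.eigenvalues (Finset.mem_Iic.mp hi)
  · intro j hj
    obtain ⟨i, hi, rfl⟩ := Finset.mem_map.mp hj
    exact Tuple.monotone_sort hK.eigenvalues (Finset.mem_Ici.mp hi)

end Matrix.IsHermitian

section SingularValues

variable {m n : ℕ}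

theorem vecNorm_nonneg (v : Fin m → ℝ) : 0 ≤ vecNorm v := Real.sqrt_nonneg _

theorem vecNorm_eq_norm_toLp (v : Fin m → ℝ) : vecNorm v = ‖WithLp.toLp 2 v‖ := by
  simp [vecNorm, EuclideanSpace.norm_eq]

theorem vecNorm_add_le (u v : Fin m → ℝ) : vecNorm (u + v) ≤ vecNorm u + vecNorm v := by
  simpa only [vecNorm_eq_norm_toLp, WithLp.toLp_add] using norm_add_le _ _

theorem vecNorm_sub_le (u v : Fin m → ℝ) : vecNorm (u - v) ≤ vecNorm u + vecNorm v := by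
  simpa only [vecNorm_eq_norm_toLp, WithLp.toLp_sub] using norm_sub_le _ _

theorem inner_toLpLin_conjTranspose_mul_self (A : Matrix (Fin m) (Fin n) ℝ)
    (x : EuclideanSpace ℝ (Fin n)) :
    ⟪toLpLin 2 2 (Aᴴ * A) x, x⟫_ℝ = vecNorm (A *ᵥ x.ofLp) ^ 2 := by
  rw [EuclideanSpace.inner_eq_star_dotProduct, vecNorm, Real.sq_sqrt (by positivity)]
  simp only [toLpLin_apply, WithLp.ofLp_toLp, star_trivial, ← mulVec_mulVec]
  rw [dotProduct_mulVec, vecMul_conjTranspose, star_trivial, star_trivial]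
  simp only [dotProduct, sq]

theorem sval_le_mul_of_vecNorm_mulVec_le {A B : Matrix (Fin m) (Fin n) ℝ} {c : ℝ} (hc : 0 ≤ c)
    (h : ∀ x, vecNorm (B *ᵥ x) ≤ c * vecNorm (A *ᵥ x)) (k : Fin n) :
    sval B k ≤ c * sval A k := by
  have hsq : ∀ x, ⟪toLpLin 2 2 (Bᴴ * B) x, x⟫_ℝ ≤ c ^ 2 * ⟪toLpLin 2 2 (Aᴴ * A) x, x⟫_ℝ := by
    intro x
    rw [inner_toLpLin_conjTranspose_mul_self, inner_toLpLin_conjTranspose_mul_self, ← mul_pow]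
    exact pow_le_pow_left₀ (vecNorm_nonneg _) (h _) 2
  rw [sval, sval, ← Real.sqrt_sq hc, ← Real.sqrt_mul (sq_nonneg c)]
  exact Real.sqrt_le_sqrt ((isHermitian_conjTranspose_mul_self A).eigenvalues_sort_le_mul
    (isHermitian_conjTranspose_mul_self B) (sq_nonneg c) hsq k.rev)


theorem exists_sq_sval_eq_eigenvalues (A : Matrix (Fin m) (Fin n) ℝ) (j : Fin n) :
    ∃ k, sval A k ^ 2 = (isHermitian_conjTranspose_mul_self A).eigenvalues j :=
  ⟨((Tuple.sort (isHermitian_conjTranspose_mul_self A).eigenvalues).symm j).rev, by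
    simpa [sval] using Real.sq_sqrt (eigenvalues_conjTranspose_mul_self_nonneg A j)⟩

theorem sMin_nonneg (A : Matrix (Fin m) (Fin n) ℝ) : 0 ≤ sMin A :=
  Real.iInf_nonneg fun _ => Real.sqrt_nonneg _

theorem specNorm_nonneg (A : Matrix (Fin m) (Fin n) ℝ) : 0 ≤ specNorm A :=
  Real.iSup_nonneg fun _ => Real.sqrt_nonneg _

theorem sMin_le_sval (A : Matrix (Fin m) (Fin n) ℝ) (k : Fin n) : sMin A ≤ sval A k :=
  ciInf_le (Set.finite_range _).bddBelow k

theorem sval_le_specNorm (A : Matrix (Fin m) (Fin n) ℝ) (k : Fin n) : sval A k ≤ specNorm A :=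
  le_ciSup (Set.finite_range _).bddAbove k

theorem sMin_mul_vecNorm_le (A : Matrix (Fin m) (Fin n) ℝ) (y : Fin n → ℝ) :
    sMin A * vecNorm y ≤ vecNorm (A *ᵥ y) := by
  have hA := isHermitian_conjTranspose_mul_self A
  have hsq := le_inner_apply_self_of_mem_span hA.toLpLin_eigenvectorBasis (c := sMin A ^ 2)
    (S := Set.univ) (x := WithLp.toLp 2 y) (fun j _ => ?_)
    (by simpa using hA.eigenvectorBasis.toBasis.mem_span _)
  · rw [inner_toLpLin_conjTranspose_mul_self, ← vecNorm_eq_norm_toLp, ← mul_pow] at hsq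
    exact (pow_le_pow_iff_left₀ (mul_nonneg (sMin_nonneg A) (vecNorm_nonneg y))
      (vecNorm_nonneg _) two_ne_zero).mp hsq
  · obtain ⟨k, hk⟩ := exists_sq_sval_eq_eigenvalues A j
    exact hk ▸ pow_le_pow_left₀ (sMin_nonneg A) (sMin_le_sval A k) 2

theorem vecNorm_mulVec_le_specNorm_mul (A : Matrix (Fin m) (Fin n) ℝ) (y : Fin n → ℝ) :
    vecNorm (A *ᵥ y) ≤ specNorm A * vecNorm y := by
  have hA := isHermitian_conjTranspose_mul_self A
  have hsq := inner_apply_self_le_of_mem_span hA.toLpLin_eigenvectorBasis (c := specNorm A ^ 2)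
    (S := Set.univ) (x := WithLp.toLp 2 y) (fun j _ => ?_)
    (by simpa using hA.eigenvectorBasis.toBasis.mem_span _)
  · rw [inner_toLpLin_conjTranspose_mul_self, ← vecNorm_eq_norm_toLp, ← mul_pow] at hsq
    exact (pow_le_pow_iff_left₀ (vecNorm_nonneg _)
      (mul_nonneg (specNorm_nonneg A) (vecNorm_nonneg y)) two_ne_zero).mp hsq
  · obtain ⟨k, hk⟩ := exists_sq_sval_eq_eigenvalues A j
    exact hk ▸ pow_le_pow_left₀ (Real.sqrt_nonneg _) (sval_le_specNorm A k) 2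

theorem one_le_specNorm_of_vecNorm_col_eq_one (A : Matrix (Fin m) (Fin n) ℝ) {j : Fin n}
    (hj : vecNorm (fun i => A i j) = 1) : 1 ≤ specNorm A := by
  have h := vecNorm_mulVec_le_specNorm_mul A (Pi.single j 1)
  have hsingle : vecNorm (Pi.single j 1 : Fin n → ℝ) = 1 := by
    simp [vecNorm, Pi.single_apply]
  rwa [mulVec_single_one, hsingle, mul_one, show A.col j = fun i => A i j from rfl, hj] at h

theorem mulVec_injective_of_rank_eq {A : Matrix (Fin m) (Fin n) ℝ} (hA : A.rank = n) :
    Function.Injective A.mulVec := by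
  have h := LinearMap.finrank_range_add_finrank_ker A.mulVecLin
  rw [← rank, hA, Module.finrank_fin_fun] at h
  rw [← coe_mulVecLin, ← LinearMap.ker_eq_bot, ← Submodule.finrank_eq_zero]
  omega

theorem posDef_conjTranspose_mul_self_of_rank_eq {A : Matrix (Fin m) (Fin n) ℝ}
    (hA : A.rank = n) : (Aᴴ * A).PosDef :=
  PosDef.conjTranspose_mul_self A (mulVec_injective_of_rank_eq hA)

theorem vecNorm_col_pos_of_rank_eq {A : Matrix (Fin m) (Fin n) ℝ} (hA : A.rank = n)
    (j : Fin n) : 0 < vecNorm (fun i => A i j) := by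
  have := (posDef_conjTranspose_mul_self_of_rank_eq hA).diag_pos (i := j)
  exact Real.sqrt_pos.mpr (by simpa [mul_apply, sq] using this)

theorem sMin_pos_of_rank_eq [Nonempty (Fin n)] {A : Matrix (Fin m) (Fin n) ℝ}
    (hA : A.rank = n) : 0 < sMin A := by
  obtain ⟨k, hk⟩ := exists_eq_ciInf_of_finite (f := sval A)
  rw [sMin, ← hk, sval]
  exact Real.sqrt_pos.mpr ((posDef_conjTranspose_mul_self_of_rank_eq hA).eigenvalues_pos _)

end SingularValues

section Perturbation

variable {m n : ℕ}

theorem vecNorm_mulVec_le_frobNorm_mul (M : Matrix (Fin m) (Fin n) ℝ) (y : Fin n → ℝ) :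
    vecNorm (M *ᵥ y) ≤ frobNorm M * vecNorm y := by
  rw [vecNorm, vecNorm, frobNorm, ← Real.sqrt_mul (by positivity), Finset.sum_mul]
  refine Real.sqrt_le_sqrt (Finset.sum_le_sum fun i _ => ?_)
  simpa [mulVec, dotProduct] using Finset.sum_mul_sq_le_sq_mul_sq Finset.univ (M i) y

theorem frobNorm_le_of_abs_le (M : Matrix (Fin m) (Fin n) ℝ) {c : ℝ} (hc : 0 ≤ c)
    (h : ∀ i j, |M i j| ≤ c) : frobNorm M ≤ Real.sqrt ((m : ℝ) * n) * c := by
  have hsum : ∑ i, ∑ j, M i j ^ 2 ≤ (m : ℝ) * n * c ^ 2 :=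
    calc ∑ i, ∑ j, M i j ^ 2 ≤ ∑ _i : Fin m, ∑ _j : Fin n, c ^ 2 :=
          Finset.sum_le_sum fun i _ => Finset.sum_le_sum fun j _ =>
            sq_le_sq.mpr ((h i j).trans_eq (abs_of_nonneg hc).symm)
      _ = (m : ℝ) * n * c ^ 2 := by simp [mul_assoc]
  rw [frobNorm, ← Real.sqrt_sq hc, ← Real.sqrt_mul (by positivity)]
  exact Real.sqrt_le_sqrt hsum

theorem kappa2_nonneg (A : Matrix (Fin m) (Fin n) ℝ) : 0 ≤ kappa2 A :=
  div_nonneg (specNorm_nonneg A) (sMin_nonneg A)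

theorem vecNorm_le_kappa2_mul {X : Matrix (Fin m) (Fin n) ℝ} (h1 : 1 ≤ specNorm X)
    (h0 : 0 < sMin X) (y : Fin n → ℝ) : vecNorm y ≤ kappa2 X * vecNorm (X *ᵥ y) :=
  calc vecNorm y ≤ specNorm X * vecNorm y := le_mul_of_one_le_left (vecNorm_nonneg y) h1
    _ = kappa2 X * (sMin X * vecNorm y) := by rw [kappa2]; field_simp
    _ ≤ kappa2 X * vecNorm (X *ᵥ y) :=
      mul_le_mul_of_nonneg_left (sMin_mul_vecNorm_le X y) (kappa2_nonneg X)

theorem mul_colScale_apply (M A : Matrix (Fin m) (Fin n) ℝ) (i : Fin m) (j : Fin n) :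
    (M * colScale A) i j = M i j * (vecNorm (fun i => A i j))⁻¹ := by
  rw [colScale, mul_diagonal]

theorem vecNorm_col_mul_colScale {A : Matrix (Fin m) (Fin n) ℝ} {j : Fin n}
    (hj : vecNorm (fun i => A i j) ≠ 0) : vecNorm (fun i => (A * colScale A) i j) = 1 := by
  have hcol : (fun i => (A * colScale A) i j) = (vecNorm (fun i => A i j))⁻¹ • fun i => A i j := by
    ext i
    simp [mul_colScale_apply, mul_comm]
  rw [hcol, vecNorm_eq_norm_toLp, WithLp.toLp_smul, norm_smul, ← vecNorm_eq_norm_toLp, norm_inv,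
    Real.norm_of_nonneg (vecNorm_nonneg _), inv_mul_cancel₀ hj]

theorem rank_mul_colScale {A : Matrix (Fin m) (Fin n) ℝ} (hA : A.rank = n) :
    (A * colScale A).rank = n := by
  rw [rank_mul_eq_left_of_isUnit_det _ _ ?_, hA]
  rw [colScale, det_diagonal]
  exact (Finset.prod_ne_zero_iff.mpr fun j _ =>
    inv_ne_zero (vecNorm_col_pos_of_rank_eq hA j).ne').isUnit

theorem vecNorm_mulVec_le_of_abs_le_mul_vecNorm_col [Nonempty (Fin n)]
    {A E : Matrix (Fin m) (Fin n) ℝ} (hA : A.rank = n) {c : ℝ} (hc : 0 ≤ c)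
    (hE : ∀ i j, |E i j| ≤ c * vecNorm (fun i => A i j)) (x : Fin n → ℝ) :
    vecNorm (E *ᵥ x) ≤ Real.sqrt ((m : ℝ) * n) * c * scaledCond A * vecNorm (A *ᵥ x) := by
  have hpos := vecNorm_col_pos_of_rank_eq hA
  set y : Fin n → ℝ := fun j => vecNorm (fun i => A i j) * x j
  have hx : x = colScale A *ᵥ y := by
    ext j
    simp [colScale, mulVec_diagonal, y, (hpos j).ne']
  have hED : ∀ i j, |(E * colScale A) i j| ≤ c := fun i j => by
    rw [mul_colScale_apply, abs_mul, abs_inv, abs_of_pos (hpos j), ← div_eq_mul_inv]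
    exact div_le_of_le_mul₀ (hpos j).le hc (hE i j)
  have hX1 : 1 ≤ specNorm (A * colScale A) := one_le_specNorm_of_vecNorm_col_eq_one _
    (vecNorm_col_mul_colScale (hpos (Classical.arbitrary _)).ne')
  calc vecNorm (E *ᵥ x) = vecNorm ((E * colScale A) *ᵥ y) := by rw [hx, mulVec_mulVec]
    _ ≤ frobNorm (E * colScale A) * vecNorm y := vecNorm_mulVec_le_frobNorm_mul _ _
    _ ≤ (Real.sqrt ((m : ℝ) * n) * c) * (scaledCond A * vecNorm ((A * colScale A) *ᵥ y)) :=
      mul_le_mul (frobNorm_le_of_abs_le _ hc hED)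
        (vecNorm_le_kappa2_mul hX1 (sMin_pos_of_rank_eq (rank_mul_colScale hA)) y)
        (vecNorm_nonneg _) (by positivity)
    _ = Real.sqrt ((m : ℝ) * n) * c * scaledCond A * vecNorm (A *ᵥ x) := by
      rw [hx, mulVec_mulVec]
      ring

theorem abs_sval_add_sub_sval_le {A E : Matrix (Fin m) (Fin n) ℝ} {η : ℝ} (hη0 : 0 ≤ η)
    (hη1 : η < 1) (hE : ∀ x, vecNorm (E *ᵥ x) ≤ η * vecNorm (A *ᵥ x)) (k : Fin n) :
    |sval (A + E) k - sval A k| ≤ η * sval A k := by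
  have hupper : sval (A + E) k ≤ (1 + η) * sval A k := by
    refine sval_le_mul_of_vecNorm_mulVec_le (by linarith) (fun x => ?_) k
    rw [add_mulVec]
    linarith [vecNorm_add_le (A *ᵥ x) (E *ᵥ x), hE x]
  have hlower : sval A k ≤ (1 - η)⁻¹ * sval (A + E) k := by
    refine sval_le_mul_of_vecNorm_mulVec_le (inv_nonneg.mpr (by linarith)) (fun x => ?_) k
    rw [le_inv_mul_iff₀ (by linarith)]
    have := vecNorm_sub_le ((A + E) *ᵥ x) (E *ᵥ x)
    rw [add_mulVec] at this ⊢
    rw [add_sub_cancel_right] at this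
    linarith [hE x]
  rw [le_inv_mul_iff₀ (by linarith)] at hlower
  rw [abs_sub_le_iff]
  constructor <;> linarith

end Perturbation

theorem singular_value_relative_perturbation_general
    {m n : ℕ}
    (A : Matrix (Fin m) (Fin n) ℝ) (hrank : A.rank = n)
    (c : ℝ) (hc : 0 ≤ c)
    (ΔA : Matrix (Fin m) (Fin n) ℝ)
    (hΔ : ∀ i j, |ΔA i j| ≤ c * vecNorm (fun i => A i j))
    (hsmall : Real.sqrt ((m : ℝ) * n) * c * scaledCond A < 1) :
    ∀ k : Fin n, |sval (A + ΔA) k - sval A k| ≤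
      Real.sqrt ((m : ℝ) * n) * c * scaledCond A * sval A k := by
  intro k
  have : Nonempty (Fin n) := ⟨k⟩
  have hη0 : 0 ≤ Real.sqrt ((m : ℝ) * n) * c * scaledCond A :=
    mul_nonneg (mul_nonneg (Real.sqrt_nonneg _) hc) (kappa2_nonneg _)
  exact abs_sval_add_sub_sval_le hη0 hsmall
    (vecNorm_mulVec_le_of_abs_le_mul_vecNorm_col hrank hc hΔ) k

/-- Relative perturbation of singular values under columnwise-small
perturbations (consequence of Demmel–Veselić Theorem 2.14). -/
theorem singular_value_relative_perturbation
    {m n : ℕ} (hmn : n ≤ m)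
    (A : Matrix (Fin m) (Fin n) ℝ) (hrank : A.rank = n)
    (c : ℝ) (hc : 0 ≤ c)
    (ΔA : Matrix (Fin m) (Fin n) ℝ)
    (hΔ : ∀ i j, |ΔA i j| ≤ c * vecNorm (fun i => A i j))
    (hsmall : Real.sqrt ((m : ℝ) * n) * c * scaledCond A < 1) :
    ∀ k : Fin n, |sval (A + ΔA) k - sval A k| ≤
      Real.sqrt ((m : ℝ) * n) * c * scaledCond A * sval A k :=
  singular_value_relative_perturbation_general A hrank c hc ΔA hΔ hsmall
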